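/- If u, v ∈ Σ_2 are distinct concatenations of Morse blocks of rapidly growing lengths (u, v ∈ D as in the constructions of Theorems 1 and 2) and 0 ≤ p < q are integers, then liminf_{k→∞} d(σ^{k+p}(u), σ^{k+q}(v)) > 0. Consequently (σ^p(u), σ^q(v)) is not a proximal pair. -/

import Mathlib

open Filter

/-- Metric on Σ₂ = {0,1}^ℕ : d(u,v) = Σ_{i≥1} δ(u_i,v_i)/2^i (coordinates 0-indexed). -/
noncomputable def dist2 (u v : ℕ → Bool) : ℝ :=
  ∑' i : ℕ, if u i = v i then 0 else (1/2)^(i+1)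

/-- The shift map. -/
def shift (u : ℕ → Bool) : ℕ → Bool := fun n => u (n + 1)

/-- Binary complement of a word. -/
def wordCompl (B : List Bool) : List Bool := B.map (fun b => !b)

/-- Morse blocks: M_0 = 0, M_{i+1} = M_i followed by its complement. -/
def morseBlock : ℕ → List Bool
  | 0 => [false]
  | i + 1 => morseBlock i ++ wordCompl (morseBlock i)

/-- The Morse sequence, the limit of the Morse blocks. -/
def morse : ℕ → Bool := fun n => (morseBlock (n + 1)).getD n false

open Classical in
/-- Infinite concatenation of a sequence of (nonempty) blocks. -/
noncomputable def concatSeq (B : ℕ → List Bool) (k : ℕ) : Bool :=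
  if h : ∃ n, ∑ i ∈ Finset.range n, (B i).length ≤ k ∧
      k < ∑ i ∈ Finset.range (n + 1), (B i).length then
    (B h.choose).getD (k - ∑ i ∈ Finset.range h.choose, (B i).length) false
  else false

open Classical in
/-- Lower distributional function. -/
noncomputable def Phi (x y : ℕ → Bool) (δ : ℝ) : ℝ :=
  liminf (fun m : ℕ =>
    (((Finset.Ioo 0 m).filter (fun k => dist2 (shift^[k] x) (shift^[k] y) < δ)).card : ℝ) / m)
    atTop

open Classical in
/-- Upper distributional function. -/
noncomputable def PhiStar (x y : ℕ → Bool) (ε : ℝ) : ℝ :=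
  limsup (fun m : ℕ =>
    (((Finset.Ioo 0 m).filter (fun k => dist2 (shift^[k] x) (shift^[k] y) < ε)).card : ℝ) / m)
    atTop

/-- A Li-Yorke scrambled triple. -/
noncomputable def ScrTriple (x y z : ℕ → Bool) : Prop :=
  x ≠ y ∧ x ≠ z ∧ y ≠ z ∧
  liminf (fun k : ℕ => max (max (dist2 (shift^[k] x) (shift^[k] y))
      (dist2 (shift^[k] x) (shift^[k] z))) (dist2 (shift^[k] y) (shift^[k] z))) atTop = 0 ∧
  0 < limsup (fun k : ℕ => min (min (dist2 (shift^[k] x) (shift^[k] y))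
      (dist2 (shift^[k] x) (shift^[k] z))) (dist2 (shift^[k] y) (shift^[k] z))) atTop

/-- Concatenation of Morse blocks M_{a j}, complemented where `e j = true`. -/
noncomputable def blockPt (a : ℕ → ℕ) (e : ℕ → Bool) : ℕ → Bool :=
  concatSeq (fun j => if e j then wordCompl (morseBlock (a j)) else morseBlock (a j))

/-- A point occurring as in Theorem 2: odd-position blocks fixed, even-position blocks chosen by α. -/
noncomputable def xpt (a : ℕ → ℕ) (α : ℕ → Bool) : ℕ → Bool :=
  blockPt a (fun j => if j % 2 = 0 then α (j / 2) else false)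

/-- Cantor set predicate. -/
def IsCantorSet (C : Set (ℕ → Bool)) : Prop :=
  C.Nonempty ∧ IsCompact C ∧ Perfect C ∧ IsTotallyDisconnected C

/-- The Morse minimal set: orbit closure of the Morse sequence. -/
def morseMinimal : Set (ℕ → Bool) := closure {y | ∃ k : ℕ, y = shift^[k] morse}

/-!
Write `r = q - p`. Both points are cut into blocks at the same places, and past the first few
blocks every block is longer than `18 r`; so any window of length `35 r` starting at position
`k + p` contains a window of length `18 r` inside a single block, in both points at once.
Inside a block each point is the Thue–Morse word or its complement, so agreement of
`σ^(k+p) u` and `σ^(k+q) v` on that window would make the Thue–Morse word `r`-periodic or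
`r`-antiperiodic (hence `2 r`-periodic) on a stretch of at least eight periods, which its
cube-freeness forbids. Hence the two points differ at a coordinate below `35 r` for all large
`k`, and their distance is at least `2 ^ (-35 r)`.
-/

def thueMorse : ℕ → Bool
  | 0 => false
  | n + 1 => xor ((n + 1) % 2 == 1) (thueMorse ((n + 1) / 2))

lemma thueMorse_two_mul (n : ℕ) : thueMorse (2 * n) = thueMorse n := by
  cases n with
  | zero => rfl
  | succ n =>
    rw [show 2 * (n + 1) = (2 * n + 1) + 1 by ring, thueMorse]
    simp [show (2 * n + 1 + 1) / 2 = n + 1 by omega, show (2 * n + 1 + 1) % 2 = 0 by omega]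

lemma thueMorse_two_mul_add_one (n : ℕ) : thueMorse (2 * n + 1) = !thueMorse n := by
  rw [thueMorse]
  simp [show (2 * n + 1) / 2 = n by omega, show (2 * n + 1) % 2 = 1 by omega]

lemma thueMorse_two_pow_add {i m : ℕ} (hm : m < 2 ^ i) :
    thueMorse (2 ^ i + m) = !thueMorse m := by
  induction i generalizing m with
  | zero =>
    obtain rfl : m = 0 := by simpa using hm
    exact thueMorse_two_mul_add_one 0
  | succ i ih =>
    obtain ⟨t, rfl | rfl⟩ := Nat.even_or_odd' m
    · rw [show 2 ^ (i + 1) + 2 * t = 2 * (2 ^ i + t) by ring, thueMorse_two_mul,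
        thueMorse_two_mul, ih (by omega)]
    · rw [show 2 ^ (i + 1) + (2 * t + 1) = 2 * (2 ^ i + t) + 1 by ring,
        thueMorse_two_mul_add_one, thueMorse_two_mul_add_one, ih (by omega)]

lemma thueMorse_ne_of_eq {n : ℕ} (h : thueMorse n = thueMorse (n + 1)) :
    thueMorse (n + 1) ≠ thueMorse (n + 2) := by
  obtain ⟨t, rfl | rfl⟩ := Nat.even_or_odd' n
  · simp [thueMorse_two_mul, thueMorse_two_mul_add_one] at h
  · rw [show 2 * t + 1 + 1 = 2 * (t + 1) by ring, show 2 * t + 1 + 2 = 2 * (t + 1) + 1 by ring,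
      thueMorse_two_mul, thueMorse_two_mul_add_one]
    simp

lemma exists_thueMorse_ne_add {r : ℕ} (hr : 0 < r) (n : ℕ) :
    ∃ j < 8 * r, thueMorse (n + j) ≠ thueMorse (n + j + r) := by
  induction r using Nat.strong_induction_on generalizing n with
  | _ r ih =>
  by_contra! hper
  obtain ⟨s, rfl | rfl⟩ := Nat.even_or_odd' r
  · -- even positions of the window repeat with period `s`
    obtain ⟨j, hj, hne⟩ := ih s (by omega) (by omega) ((n + 1) / 2)
    apply hne
    have := hper (2 * ((n + 1) / 2 + j) - n) (by omega)
    rwa [show n + (2 * ((n + 1) / 2 + j) - n) = 2 * ((n + 1) / 2 + j) by omega,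
      show 2 * ((n + 1) / 2 + j) + 2 * s = 2 * ((n + 1) / 2 + j + s) by ring,
      thueMorse_two_mul, thueMorse_two_mul] at this
  · -- an odd period turns the alternation `t (2m+1) = !t (2m)` into three equal letters
    set m := (n + 1) / 2
    have step : ∀ i ≤ 1, thueMorse (m + s + i) = thueMorse (m + s + i + 1) := by
      intro i hi
      have e₁ := hper (2 * (m + i) - n) (by omega)
      have e₂ := hper (2 * (m + i) + 1 - n) (by omega)
      rw [show n + (2 * (m + i) - n) = 2 * (m + i) by omega,
        show 2 * (m + i) + (2 * s + 1) = 2 * (m + s + i) + 1 by ring,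
        thueMorse_two_mul, thueMorse_two_mul_add_one] at e₁
      rw [show n + (2 * (m + i) + 1 - n) = 2 * (m + i) + 1 by omega,
        show 2 * (m + i) + 1 + (2 * s + 1) = 2 * (m + s + i + 1) by ring,
        thueMorse_two_mul, thueMorse_two_mul_add_one, e₁] at e₂
      simpa using e₂
    exact thueMorse_ne_of_eq (step 0 (by norm_num)) (by simpa [add_assoc] using step 1 le_rfl)

lemma exists_thueMorse_ne_xor_add {r : ℕ} (hr : 0 < r) (n : ℕ) (c : Bool) :
    ∃ j < 17 * r, thueMorse (n + j) ≠ xor c (thueMorse (n + j + r)) := by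
  by_contra! hper
  cases c with
  | false =>
    obtain ⟨j, hj, hne⟩ := exists_thueMorse_ne_add hr n
    exact hne (by simpa using hper j (by omega))
  | true =>
    obtain ⟨j, hj, hne⟩ := exists_thueMorse_ne_add (show 0 < 2 * r by omega) n
    have e₁ := hper j (by omega)
    have e₂ := hper (j + r) (by omega)
    rw [← add_assoc, add_assoc _ r r, ← two_mul] at e₂
    simp only [Bool.true_xor] at e₁ e₂
    exact hne (by rw [e₁, e₂, Bool.not_not])

lemma getD_wordCompl {B : List Bool} {n : ℕ} (hn : n < B.length) :
    (wordCompl B).getD n false = !B.getD n false := by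
  rw [wordCompl, List.getD_eq_getElem _ _ (by simpa), List.getD_eq_getElem _ _ hn,
    List.getElem_map]

lemma length_morseBlock (i : ℕ) : (morseBlock i).length = 2 ^ i := by
  induction i with
  | zero => rfl
  | succ i ih => simp [morseBlock, wordCompl, ih, pow_succ, mul_two]

lemma getD_morseBlock {i n : ℕ} (hn : n < 2 ^ i) :
    (morseBlock i).getD n false = thueMorse n := by
  induction i generalizing n with
  | zero =>
    obtain rfl : n = 0 := by simpa using hn
    simp [morseBlock, thueMorse]
  | succ i ih =>
    rw [morseBlock]
    rcases lt_or_ge n (2 ^ i) with h | h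
    · rw [List.getD_append _ _ _ _ (by rwa [length_morseBlock]), ih h]
    · obtain ⟨m, rfl⟩ := Nat.exists_eq_add_of_le h
      have hm : m < 2 ^ i := by rw [pow_succ] at hn; omega
      rw [List.getD_append_right _ _ _ _ (by rw [length_morseBlock]; omega), length_morseBlock,
        Nat.add_sub_cancel_left, getD_wordCompl (by rwa [length_morseBlock]), ih hm,
        thueMorse_two_pow_add hm]

lemma concatSeq_apply (B : ℕ → List Bool) {n k : ℕ}
    (h₁ : ∑ i ∈ Finset.range n, (B i).length ≤ k)
    (h₂ : k < ∑ i ∈ Finset.range (n + 1), (B i).length) :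
    concatSeq B k = (B n).getD (k - ∑ i ∈ Finset.range n, (B i).length) false := by
  have hex : ∃ n, ∑ i ∈ Finset.range n, (B i).length ≤ k ∧
      k < ∑ i ∈ Finset.range (n + 1), (B i).length := ⟨n, h₁, h₂⟩
  have hmono : Monotone fun n => ∑ i ∈ Finset.range n, (B i).length := fun _ _ h =>
    Finset.sum_le_sum_of_subset (Finset.range_subset_range.2 h)
  obtain ⟨hc₁, hc₂⟩ := hex.choose_spec
  have hchoose : hex.choose = n := by
    by_contra hne
    rcases lt_or_gt_of_ne hne with h | h
    · have := hmono (show hex.choose + 1 ≤ n by omega); dsimp only at this; omega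
    · have := hmono (show n + 1 ≤ hex.choose by omega); dsimp only at this; omega
  rw [concatSeq, dif_pos hex, hchoose]

def blockStart (a : ℕ → ℕ) (j : ℕ) : ℕ := ∑ i ∈ Finset.range j, 2 ^ a i

lemma blockStart_succ (a : ℕ → ℕ) (j : ℕ) :
    blockStart a (j + 1) = blockStart a j + 2 ^ a j :=
  Finset.sum_range_succ _ j

lemma blockStart_strictMono (a : ℕ → ℕ) : StrictMono (blockStart a) :=
  strictMono_nat_of_lt_succ fun j => by
    rw [blockStart_succ]; exact Nat.lt_add_of_pos_right (Nat.two_pow_pos _)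

lemma exists_blockStart_le_lt (a : ℕ → ℕ) (m : ℕ) :
    ∃ j, blockStart a j ≤ m ∧ m < blockStart a (j + 1) := by
  have hm : m ∈ Set.Ico (blockStart a 0) (blockStart a (m + 1)) :=
    ⟨Nat.zero_le m, (blockStart_strictMono a).le_apply.trans_lt' (Nat.lt_succ_self m)⟩
  obtain ⟨j, h₁, -, h₂⟩ :
      ∃ j, blockStart a j ≤ m ∧ j ≤ m ∧ m < blockStart a (j + 1) := by
    simpa using Ico_subset_biUnion_Ico (m + 1) (blockStart a) hm
  exact ⟨j, h₁, h₂⟩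

lemma blockPt_apply (a : ℕ → ℕ) (e : ℕ → Bool) {j m : ℕ}
    (h₁ : blockStart a j ≤ m) (h₂ : m < blockStart a (j + 1)) :
    blockPt a e m = xor (e j) (thueMorse (m - blockStart a j)) := by
  set B := fun j => if e j then wordCompl (morseBlock (a j)) else morseBlock (a j)
  have hlen : ∀ i, (B i).length = 2 ^ a i := fun i => by
    by_cases h : e i <;> simp [B, h, wordCompl, length_morseBlock]
  have hsum : ∀ n, ∑ i ∈ Finset.range n, (B i).length = blockStart a n := fun n =>
    Finset.sum_congr rfl fun i _ => hlen i
  have hlt : m - blockStart a j < 2 ^ a j := by rw [blockStart_succ] at h₂; omega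
  rw [blockPt, concatSeq_apply B (by rwa [hsum]) (by rwa [hsum]), hsum]
  by_cases h : e j
  · simp only [B, h, if_true, Bool.true_xor]
    rw [getD_wordCompl (by rwa [length_morseBlock]), getD_morseBlock hlt]
  · simp only [B, h, if_false, Bool.false_xor, Bool.false_eq_true]
    rw [getD_morseBlock hlt]

section Window

variable (a : ℕ → ℕ) (e f : ℕ → Bool) {r : ℕ}

lemma exists_blockPt_ne_within_block (hr : 0 < r) {j m : ℕ} (h₁ : blockStart a j ≤ m)
    (h₂ : m + 18 * r ≤ blockStart a (j + 1)) :
    ∃ t < 17 * r, blockPt a e (m + t) ≠ blockPt a f (m + t + r) := by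
  obtain ⟨t, ht, hne⟩ := exists_thueMorse_ne_xor_add hr (m - blockStart a j) (xor (e j) (f j))
  refine ⟨t, ht, fun heq => hne ?_⟩
  rw [blockPt_apply a e (j := j) (by omega) (by omega),
    blockPt_apply a f (j := j) (by omega) (by omega),
    show m + t - blockStart a j = m - blockStart a j + t by omega,
    show m + t + r - blockStart a j = m - blockStart a j + t + r by omega] at heq
  revert heq
  cases e j <;> cases f j <;> simp

lemma exists_blockPt_ne_add (hr : 0 < r) {J : ℕ} (hlong : ∀ j ≥ J, 18 * r ≤ 2 ^ a j)
    {x : ℕ} (hx : blockStart a J ≤ x) :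
    ∃ i < 35 * r, blockPt a e (x + i) ≠ blockPt a f (x + i + r) := by
  obtain ⟨j, h₁, h₂⟩ := exists_blockStart_le_lt a x
  have hJj : J ≤ j :=
    Nat.lt_succ_iff.mp ((blockStart_strictMono a).lt_iff_lt.mp (hx.trans_lt h₂))
  by_cases hfits : x + 18 * r ≤ blockStart a (j + 1)
  · obtain ⟨t, ht, hne⟩ := exists_blockPt_ne_within_block a e f hr h₁ hfits
    exact ⟨t, by omega, hne⟩
  · have hnext := blockStart_succ a (j + 1)
    have := hlong (j + 1) (by omega)
    obtain ⟨t, ht, hne⟩ :=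
      exists_blockPt_ne_within_block a e f hr (j := j + 1) le_rfl (by omega)
    refine ⟨blockStart a (j + 1) - x + t, by omega, ?_⟩
    rwa [← Nat.add_assoc, Nat.add_sub_cancel' h₂.le]

end Window

lemma summable_half_pow_succ : Summable fun i : ℕ => (1 / 2 : ℝ) ^ (i + 1) :=
  (summable_geometric_two.mul_right (1 / 2)).congr fun i => (pow_succ _ i).symm

lemma summable_dist2_term (u v : ℕ → Bool) :
    Summable fun i : ℕ => if u i = v i then (0 : ℝ) else (1 / 2) ^ (i + 1) :=
  summable_half_pow_succ.of_nonneg_of_le (fun i => by positivity)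
    (fun i => by split_ifs <;> norm_num)

lemma dist2_le_one (u v : ℕ → Bool) : dist2 u v ≤ 1 := by
  calc dist2 u v ≤ ∑' i : ℕ, ((1 : ℝ) / 2) ^ (i + 1) :=
        (summable_dist2_term u v).tsum_le_tsum (fun i => by split_ifs <;> norm_num)
          summable_half_pow_succ
    _ = 1 := by simp only [pow_succ, tsum_mul_right, tsum_geometric_two]; norm_num

lemma le_dist2_of_ne {u v : ℕ → Bool} {i : ℕ} (h : u i ≠ v i) :
    (1 / 2 : ℝ) ^ (i + 1) ≤ dist2 u v := by
  simpa [dist2, h] using (summable_dist2_term u v).le_tsum i fun j _ => by positivity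

lemma iterate_shift_apply (k : ℕ) (u : ℕ → Bool) (n : ℕ) : shift^[k] u n = u (k + n) := by
  induction k generalizing u with
  | zero => simp
  | succ k ih => rw [Function.iterate_succ_apply, ih, shift, add_right_comm]

lemma liminf_dist2_pos {x y : ℕ → ℕ → Bool} {c : ℝ} (hc : 0 < c)
    (h : ∀ᶠ k in atTop, c ≤ dist2 (x k) (y k)) :
    0 < liminf (fun k => dist2 (x k) (y k)) atTop :=
  hc.trans_le <| le_liminf_of_le
    (isBoundedUnder_of ⟨1, fun _ => dist2_le_one _ _⟩).isCoboundedUnder_ge h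

theorem stmt13_general (a : ℕ → ℕ) (e f : ℕ → Bool) (hmono : StrictMono a) (p q : ℕ) (hpq : p < q) :
    0 < liminf (fun k : ℕ =>
      dist2 (shift^[k + p] (blockPt a e)) (shift^[k + q] (blockPt a f))) atTop := by
  obtain ⟨r, hr, rfl⟩ : ∃ r, 0 < r ∧ q = p + r := ⟨q - p, by omega, by omega⟩
  have hlong : ∀ j ≥ 18 * r, 18 * r ≤ 2 ^ a j := fun j hj =>
    hj.trans <| (hmono.id_le j).trans Nat.lt_two_pow_self.le
  refine liminf_dist2_pos (c := (1 / 2) ^ (35 * r)) (by positivity) ?_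
  filter_upwards [eventually_ge_atTop (blockStart a (18 * r))] with k hk
  obtain ⟨i, hi, hne⟩ := exists_blockPt_ne_add a e f hr hlong (hk.trans (Nat.le_add_right k p))
  calc (1 / 2 : ℝ) ^ (35 * r) ≤ (1 / 2) ^ (i + 1) :=
        pow_le_pow_of_le_one (by norm_num) (by norm_num) hi
    _ ≤ _ := le_dist2_of_ne <| by
      rwa [iterate_shift_apply, iterate_shift_apply, ← add_assoc, add_right_comm (k + p) r i]

theorem stmt13 (a : ℕ → ℕ) (e f : ℕ → Bool) (hmono : StrictMono a) (hpos : ∀ n, 0 < a n)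
    (hratio : Tendsto (fun n => (a n : ℝ) / (a (n + 1) : ℝ)) atTop (nhds 0))
    (hne : blockPt a e ≠ blockPt a f) (p q : ℕ) (hpq : p < q) :
    0 < liminf (fun k : ℕ =>
      dist2 (shift^[k + p] (blockPt a e)) (shift^[k + q] (blockPt a f))) atTop :=
  stmt13_general a e f hmono p q hpq
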